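/- Let a¹, …, aⁿ ∈ ℤⁿ be linearly independent over ℚ and let d = |det(a¹, …, aⁿ)|. (a) If d > 1, then there exists a nonzero lattice point ã ∈ ℤⁿ of the form ã = Σᵢ λᵢ aⁱ with 0 ≤ λᵢ < 1 for all i. (b) For any such ã = Σᵢ λᵢ aⁱ and any index i with λᵢ ≠ 0, the matrix obtained from (a¹, …, aⁿ) by replacing the i-th column by ã satisfies |det(a¹, …, ã, …, aⁿ)| = λᵢ · d < d. -/

import Mathlib

/-- The `n × n` rational matrix whose `c`-th column is the integer vector `a c`. -/
def colMatrix {n : ℕ} (a : Fin n → Fin n → ℤ) : Matrix (Fin n) (Fin n) ℚ :=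
  Matrix.of fun r c => ((a c r : ℤ) : ℚ)

/-- The combination `ã = Σᵢ λᵢ aⁱ` of the columns. -/
def comb {n : ℕ} (a : Fin n → Fin n → ℤ) (lam : Fin n → ℚ) : Fin n → ℚ :=
  fun j => ∑ i, lam i * ((a i j : ℤ) : ℚ)

/-- A point of `ℚⁿ` is a lattice point if all its coordinates are integers. -/
def IsLatticePoint {n : ℕ} (x : Fin n → ℚ) : Prop := ∀ j, ∃ m : ℤ, x j = m

lemma cramer_mulVec' {n : ℕ} (A : Matrix (Fin n) (Fin n) ℚ) (lam : Fin n → ℚ) :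
    Matrix.cramer A (A.mulVec lam) = A.det • lam := by
  have h : A.mulVec lam = ∑ k, lam k • (fun j => A j k : Fin n → ℚ) := by
    funext j
    simp [Matrix.mulVec, dotProduct, mul_comm]
  rw [h, map_sum]
  have h2 : ∀ k, Matrix.cramer A (lam k • (fun j => A j k : Fin n → ℚ))
      = lam k • (Pi.single k A.det : Fin n → ℚ) := by
    intro k
    rw [map_smul, Matrix.cramer_row_self A (fun j => A j k) k (fun j => rfl)]
  simp_rw [h2]
  funext i
  simp [Pi.single_apply, mul_comm]

lemma comb_eq_mulVec {n : ℕ} (a : Fin n → Fin n → ℤ) (lam : Fin n → ℚ) :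
    comb a lam = (colMatrix a).mulVec lam := by
  funext j
  simp [comb, colMatrix, Matrix.mulVec, dotProduct, mul_comm]

/-- key step of the paper's toric resolution of singularities,
Section 12.1.  Let `a¹, …, aⁿ ∈ ℤⁿ` be linearly independent over `ℚ` and let
`d = |det(a¹, …, aⁿ)|`.
(a) If `d > 1`, then there is a nonzero lattice point `ã = Σᵢ λᵢ aⁱ` with
`0 ≤ λᵢ < 1` for all `i`.
(b) For any such `ã` and any index `i` with `λᵢ ≠ 0`, replacing the `i`-th column
by `ã` yields `|det(a¹, …, ã, …, aⁿ)| = λᵢ · d < d`. -/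
theorem multiplicity_reduction_step
    {n : ℕ} (a : Fin n → Fin n → ℤ)
    (hli : LinearIndependent ℚ fun i => (fun j => ((a i j : ℤ) : ℚ))) :
    ((1 : ℚ) < |(colMatrix a).det| →
      ∃ lam : Fin n → ℚ, (∀ i, 0 ≤ lam i ∧ lam i < 1) ∧
        comb a lam ≠ 0 ∧ IsLatticePoint (comb a lam)) ∧
    (∀ lam : Fin n → ℚ, (∀ i, 0 ≤ lam i ∧ lam i < 1) →
      comb a lam ≠ 0 → IsLatticePoint (comb a lam) →
      ∀ i, lam i ≠ 0 →
        |((colMatrix a).updateCol i (comb a lam)).det| = lam i * |(colMatrix a).det| ∧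
        lam i * |(colMatrix a).det| < |(colMatrix a).det|) := by
  set A := colMatrix a with hA
  -- the columns of A are the vectors a i
  have hcols : (fun i => (fun j => ((a i j : ℤ) : ℚ))) = fun i => A.transpose i := by
    funext i j; rfl
  have hunit : IsUnit A := by
    rw [← Matrix.linearIndependent_cols_iff_isUnit]
    rw [hcols] at hli
    exact hli
  have hdetU : IsUnit A.det := (Matrix.isUnit_iff_isUnit_det A).mp hunit
  have hdet : A.det ≠ 0 := hdetU.ne_zero
  have hdetpos : 0 < |A.det| := abs_pos.mpr hdet
  constructor
  · -- part (a)
    intro hd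
    -- the inverse matrix has a non-integral entry
    have hnotint : ∃ i j, ¬ ∃ m : ℤ, A⁻¹ i j = m := by
      by_contra hcon
      push_neg at hcon
      choose B hB using hcon
      -- integer determinants
      set M : Matrix (Fin n) (Fin n) ℤ := Matrix.of fun r c => a c r with hM
      have hAM : A = M.map (Int.cast : ℤ → ℚ) := by
        funext r c; rfl
      have hinv : A⁻¹ = (Matrix.of B).map (Int.cast : ℤ → ℚ) := by
        funext r c
        exact hB r c
      have hmul : A * A⁻¹ = 1 := Matrix.mul_nonsing_inv A hdetU
      have hdetmul : A.det * A⁻¹.det = 1 := by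
        rw [← Matrix.det_mul, hmul, Matrix.det_one]
      rw [hinv, hAM] at hdetmul
      have hcast : ∀ N : Matrix (Fin n) (Fin n) ℤ,
          (N.map (Int.cast : ℤ → ℚ)).det = ((N.det : ℤ) : ℚ) := by
        intro N
        have h := (Int.castRingHom ℚ).map_det N
        simp only [RingHom.mapMatrix_apply] at h
        simpa using h.symm
      rw [hcast, hcast] at hdetmul
      have : ((M.det * (Matrix.of B).det : ℤ) : ℚ) = ((1 : ℤ) : ℚ) := by
        rw [Int.cast_mul, Int.cast_one]
        exact hdetmul
      have hZ : M.det * (Matrix.of B).det = 1 := Int.cast_injective this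
      have habs : |A.det| = 1 := by
        rw [hAM, hcast]
        rcases Int.isUnit_iff.mp (IsUnit.of_mul_eq_one _ hZ) with h1 | h1 <;>
          simp [h1]
      rw [habs] at hd
      exact lt_irrefl _ hd
    obtain ⟨i0, j0, hij0⟩ := hnotint
    set lam' : Fin n → ℚ := fun k => A⁻¹ k j0 with hlam'
    set lam : Fin n → ℚ := fun k => Int.fract (lam' k) with hlam
    have hAlam' : A.mulVec lam' = fun r => (1 : Matrix (Fin n) (Fin n) ℚ) r j0 := by
      funext r
      have := Matrix.mul_nonsing_inv A hdetU
      calc A.mulVec lam' r = (A * A⁻¹) r j0 := by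
            simp [Matrix.mulVec, dotProduct, Matrix.mul_apply, hlam']
        _ = (1 : Matrix (Fin n) (Fin n) ℚ) r j0 := by rw [this]
    refine ⟨lam, fun i => ⟨Int.fract_nonneg _, Int.fract_lt_one _⟩, ?_, ?_⟩
    · -- nonzero
      intro hzero
      rw [comb_eq_mulVec] at hzero
      have : lam = 0 := by
        have h1 : A⁻¹.mulVec (A.mulVec lam) = A⁻¹.mulVec 0 := by rw [hzero]
        rwa [Matrix.mulVec_mulVec, Matrix.nonsing_inv_mul A hdetU, Matrix.one_mulVec,
          Matrix.mulVec_zero] at h1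
      have : Int.fract (lam' i0) = 0 := congrFun this i0
      apply hij0
      refine ⟨⌊lam' i0⌋, ?_⟩
      have := Int.fract_add_floor (lam' i0)
      rw [‹Int.fract (lam' i0) = 0›] at this
      simpa using this.symm
    · -- lattice point
      intro j
      rw [comb_eq_mulVec]
      have : A.mulVec lam j = A.mulVec lam' j - A.mulVec (fun k => ((⌊lam' k⌋ : ℤ) : ℚ)) j := by
        simp only [hlam, Matrix.mulVec, dotProduct, Int.fract, mul_sub,
          Finset.sum_sub_distrib]
      rw [this, hAlam']
      refine ⟨(if j = j0 then 1 else 0) - ∑ k, a k j * ⌊lam' k⌋, ?_⟩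
      push_cast
      simp [Matrix.one_apply, Matrix.mulVec, dotProduct, colMatrix, hA]
  · -- part (b)
    intro lam hb hne hlp i hi
    have hdetu : (A.updateCol i (comb a lam)).det = A.det * lam i := by
      have := congrFun (cramer_mulVec' A lam) i
      rw [← comb_eq_mulVec] at this
      rw [← Matrix.cramer_apply]
      simpa using this
    have h0 : 0 ≤ lam i := (hb i).1
    have h1 : lam i < 1 := (hb i).2
    constructor
    · rw [hdetu, abs_mul, abs_of_nonneg h0, mul_comm]
    · exact mul_lt_of_lt_one_left hdetpos h1
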